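/- arXiv:1609.03398 — 6 statements merged into one kernel-verified Lean document; each statement's English description precedes it below -/
import Mathlib

section
/- Let φ ∈ ℤ[x], let b ∈ ℤ, let n ≥ 1, and let q be a prime dividing φ^n(b). If q is not a primitive prime divisor of φ^n(b), i.e. q divides φ^{m′}(b) for some 1 ≤ m′ < n, then there exists m with 1 ≤ m ≤ ⌊n/2⌋ such that q divides φ^m(b) or q divides φ^m(0). -/
open Polynomial

noncomputable section

/-- The `n`-th iterate of a polynomial under composition: `polyIter φ 0 = X`,
`polyIter φ (n+1) = φ ∘ (polyIter φ n)`. -/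
def polyIter {R : Type*} [CommRing R] (φ : Polynomial R) : ℕ → Polynomial R
  | 0 => X
  | n + 1 => φ.comp (polyIter φ n)

/-- The splitting field `K_n` of the `n`-th iterate of `φ ∈ ℤ[x]` over `ℚ`, inside a fixed
algebraic closure of `ℚ`. -/
def Kfield (φ : Polynomial ℤ) (n : ℕ) : IntermediateField ℚ (AlgebraicClosure ℚ) :=
  IntermediateField.adjoin ℚ ((polyIter φ n).rootSet (AlgebraicClosure ℚ))

/-- The order of `Gal(K_n / K_{n-1})`: the number of automorphisms of `K_n` over `ℚ`
fixing every element of `K_{n-1}` pointwise. -/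
def relGalCard (φ : Polynomial ℤ) (n : ℕ) : ℕ :=
  Nat.card {σ : Kfield φ n ≃ₐ[ℚ] Kfield φ n //
    ∀ (x : AlgebraicClosure ℚ) (_ : x ∈ Kfield φ (n - 1)) (hx' : x ∈ Kfield φ n),
      σ ⟨x, hx'⟩ = ⟨x, hx'⟩}

end


lemma polyIter_add {R : Type*} [CommRing R] (φ : Polynomial R) (k m : ℕ) :
    polyIter φ (k + m) = (polyIter φ k).comp (polyIter φ m) := by
  induction k with
  | zero => simp [polyIter]
  | succ k ih =>
      rw [show k + 1 + m = (k + m) + 1 by omega, polyIter, ih, polyIter, Polynomial.comp_assoc]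

/-- Let `φ ∈ ℤ[x]`, `b ∈ ℤ`, `n ≥ 1`, and let `q` be a prime dividing
`φ^n(b)`. If `q` is not a primitive prime divisor of `φ^n(b)`, i.e. `q ∣ φ^{m'}(b)` for some
`1 ≤ m' < n`, then there is `m` with `1 ≤ m ≤ ⌊n/2⌋` such that `q ∣ φ^m(b)` or `q ∣ φ^m(0)`. -/
theorem stmt_9 (φ : Polynomial ℤ) (b : ℤ) (n : ℕ) (hn : 1 ≤ n)
    (q : ℕ) (hq : q.Prime) (hdvd : (q : ℤ) ∣ (polyIter φ n).eval b)
    (hnotprim : ∃ m' : ℕ, 1 ≤ m' ∧ m' < n ∧ (q : ℤ) ∣ (polyIter φ m').eval b) :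
    ∃ m : ℕ, 1 ≤ m ∧ m ≤ n / 2 ∧
      ((q : ℤ) ∣ (polyIter φ m).eval b ∨ (q : ℤ) ∣ (polyIter φ m).eval 0) := by
  obtain ⟨m', hm1, hm2, hqm⟩ := hnotprim
  by_cases h : m' ≤ n / 2
  · exact ⟨m', hm1, h, Or.inl hqm⟩
  · push_neg at h
    refine ⟨n - m', by omega, by omega, Or.inr ?_⟩
    have hcomp : (polyIter φ n).eval b
        = (polyIter φ (n - m')).eval ((polyIter φ m').eval b) := by
      conv_lhs => rw [show n = (n - m') + m' by omega, polyIter_add, Polynomial.eval_comp]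
    have hsub : (q : ℤ) ∣ (polyIter φ (n - m')).eval ((polyIter φ m').eval b)
        - (polyIter φ (n - m')).eval 0 := by
      have := Polynomial.sub_dvd_eval_sub ((polyIter φ m').eval b) 0 (polyIter φ (n - m'))
      rw [sub_zero] at this
      exact hqm.trans this
    have h2 : (q : ℤ) ∣ (polyIter φ (n - m')).eval ((polyIter φ m').eval b) := hcomp ▸ hdvd
    simpa using dvd_sub h2 hsub
end

section
/- Let d ≥ 3 be an odd integer, let k be a positive integer, let φ(x) = x^d + kd·x^{d−1} − kd ∈ ℤ[x], and let a = −k(d−1). Then φ^n(a) > 0 for all n ≥ 1. -/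
open Polynomial

/-
For `x ≥ 1` one has `φ(x) = x^d + kd (x^{d-1} - 1) ≥ 1`, so `[1, ∞)` is `φ`-invariant and it
suffices to check `φ(a) ≥ 1`. With `N = k(d-1)`, so that `a = -N` and `kd - N = k`, the parity
of `d` gives `φ(-N) = N^{d-1}(kd - N) - kd = k (N^{d-1} - d)`, which is positive because
`N^{d-1} ≥ 2^{d-1} > d` for `d ≥ 3`.
-/

theorem eval_polyIter {R : Type*} [CommRing R] (φ : R[X]) (n : ℕ) (x : R) :
    (polyIter φ n).eval x = (fun y => φ.eval y)^[n] x := by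
  induction n with
  | zero => simp [polyIter]
  | succ n ih => rw [polyIter, eval_comp, ih, Function.iterate_succ_apply']

theorem eval_polyIter_mem_of_mapsTo {R : Type*} [CommRing R] {φ : R[X]} {s : Set R}
    (hs : Set.MapsTo (fun y => φ.eval y) s s) {a : R} (ha : φ.eval a ∈ s) {n : ℕ}
    (hn : 1 ≤ n) : (polyIter φ n).eval a ∈ s := by
  obtain ⟨m, rfl⟩ := Nat.exists_eq_add_of_le' hn
  rw [eval_polyIter, Function.iterate_succ_apply]
  exact hs.iterate m ha

theorem one_le_pow_add_mul_pow_pred_sub {R : Type*} [CommRing R] [LinearOrder R]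
    [IsStrictOrderedRing R] {x c : R} (hx : 1 ≤ x) (hc : 0 ≤ c) (d : ℕ) :
    1 ≤ x ^ d + c * x ^ (d - 1) - c := by
  have hxd : 1 ≤ x ^ d := one_le_pow₀ hx
  have hxd' : 0 ≤ c * (x ^ (d - 1) - 1) := mul_nonneg hc (sub_nonneg.mpr (one_le_pow₀ hx))
  linarith [mul_sub c (x ^ (d - 1)) 1]

theorem Nat.succ_lt_two_pow {m : ℕ} (hm : 2 ≤ m) : m + 1 < 2 ^ m := by
  induction m, hm using Nat.le_induction with
  | base => norm_num
  | succ m _ ih => rw [pow_succ]; omega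

theorem Odd.neg_pow_add_mul_neg_pow_pred_sub {R : Type*} [CommRing R] {d : ℕ} (hd : Odd d)
    (k : R) :
    (-(k * (d - 1))) ^ d + k * d * (-(k * (d - 1))) ^ (d - 1) - k * d
      = k * ((k * (d - 1)) ^ (d - 1) - d) := by
  obtain ⟨m, rfl⟩ := hd
  simp only [Nat.add_sub_cancel, Odd.neg_pow ⟨m, rfl⟩, Even.neg_pow ⟨m, two_mul m⟩]
  push_cast
  ring

theorem natCast_lt_mul_pred_pow_pred {d : ℕ} (hd : 3 ≤ d) {k : ℤ} (hk : 1 ≤ k) :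
    (d : ℤ) < (k * (d - 1)) ^ (d - 1) := by
  have hN : (2 : ℤ) ≤ k * (d - 1) := by
    have : (2 : ℤ) ≤ d - 1 := by omega
    nlinarith
  have hpow : d < 2 ^ (d - 1) := by
    simpa [Nat.sub_add_cancel (by omega : 1 ≤ d)] using Nat.succ_lt_two_pow (m := d - 1) (by omega)
  calc (d : ℤ) < 2 ^ (d - 1) := by exact_mod_cast hpow
    _ ≤ (k * (d - 1)) ^ (d - 1) := pow_le_pow_left₀ (by norm_num) hN _

/-- Let `d ≥ 3` be odd, `k ≥ 1`, `φ(x) = x^d + kd·x^{d-1} - kd`, and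
`a = -k(d-1)`. Then `φ^n(a) > 0` for all `n ≥ 1`. -/
theorem stmt_10 (d k : ℕ) (hd3 : 3 ≤ d) (hodd : Odd d) (hk : 0 < k)
    (φ : Polynomial ℤ)
    (hφ : φ = X ^ d + C ((k : ℤ) * d) * X ^ (d - 1) - C ((k : ℤ) * d))
    (a : ℤ) (ha : a = -(k : ℤ) * ((d : ℤ) - 1)) :
    ∀ n : ℕ, 1 ≤ n → 0 < (polyIter φ n).eval a := by
  intro n hn
  have heval (x : ℤ) : φ.eval x = x ^ d + k * d * x ^ (d - 1) - k * d := by simp [hφ]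
  have hinv : Set.MapsTo (fun y => φ.eval y) (Set.Ici 1) (Set.Ici 1) := fun x hx => by
    simpa only [Set.mem_Ici, heval] using
      one_le_pow_add_mul_pow_pred_sub hx (by positivity : (0 : ℤ) ≤ k * d) d
  have hbase : 1 ≤ φ.eval a := by
    have hk1 : (1 : ℤ) ≤ k := by exact_mod_cast hk
    rw [heval, ha, neg_mul, hodd.neg_pow_add_mul_neg_pow_pred_sub]
    nlinarith [natCast_lt_mul_pred_pow_pred hd3 hk1]
  exact zero_lt_one.trans_le (eval_polyIter_mem_of_mapsTo hinv hbase hn)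
end

section
/- Let p ≥ 5 be prime, let k be a positive integer with p ∤ k and k ≡ 1 (mod 3), let φ(x) = x^p + kp·x^{p−1} − kp ∈ ℤ[x], and let a = −k(p−1). Then φ^n(a) ≡ 2 (mod 3) for every n ≥ 1; consequently, for every n ≥ 1 and every y ∈ ℤ, φ^n(a) ≠ k·y². -/
open Polynomial

/-- Let `p ≥ 5` be prime, `k ≥ 1` with `p ∤ k` and `k ≡ 1 (mod 3)`,
`φ(x) = x^p + kp·x^{p-1} - kp`, and `a = -k(p-1)`. Then `φ^n(a) ≡ 2 (mod 3)` for all `n ≥ 1`;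
consequently `φ^n(a) ≠ k·y²` for every `n ≥ 1` and every `y ∈ ℤ`. -/
theorem stmt_12 (p k : ℕ) (hp : p.Prime) (hp5 : 5 ≤ p) (hk : 0 < k) (hpk : ¬ p ∣ k)
    (hk3 : k % 3 = 1)
    (φ : Polynomial ℤ)
    (hφ : φ = X ^ p + C ((k : ℤ) * p) * X ^ (p - 1) - C ((k : ℤ) * p))
    (a : ℤ) (ha : a = -(k : ℤ) * ((p : ℤ) - 1)) :
    (∀ n : ℕ, 1 ≤ n → (polyIter φ n).eval a % 3 = 2) ∧
      ∀ n : ℕ, 1 ≤ n → ∀ y : ℤ, (polyIter φ n).eval a ≠ (k : ℤ) * y ^ 2 := by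
  have hpodd : Odd p := hp.odd_of_ne_two (by omega)
  have hpe : Even (p - 1) := Nat.Odd.sub_odd hpodd (by decide)
  have hk1 : ((k : ℕ) : ZMod 3) = 1 := by
    have : ((k % 3 : ℕ) : ZMod 3) = ((k : ℕ) : ZMod 3) := ZMod.natCast_mod k 3
    rw [hk3] at this
    simpa using this.symm
  have h2p : (2 : ZMod 3) ^ p = 2 := by
    have h : (2 : ZMod 3) = -1 := by decide
    rw [h, hpodd.neg_one_pow]
  have h2p1 : (2 : ZMod 3) ^ (p - 1) = 1 := by
    have h : (2 : ZMod 3) = -1 := by decide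
    rw [h, hpe.neg_one_pow]
  have heval : ∀ x : ℤ, φ.eval x = x ^ p + k * p * x ^ (p - 1) - k * p := by
    intro x; simp [hφ]
  have hstep : ∀ x : ℤ, ((x : ZMod 3) = 2) → ((φ.eval x : ℤ) : ZMod 3) = 2 := by
    intro x hx
    rw [heval]
    push_cast
    rw [hx, hk1, h2p, h2p1]
    ring
  have hbase : ((φ.eval a : ℤ) : ZMod 3) = 2 := by
    have hane : ((p : ℕ) : ZMod 3) ≠ 0 := by
      intro h
      rw [ZMod.natCast_eq_zero_iff] at h
      have := (Nat.prime_dvd_prime_iff_eq (by norm_num) hp).mp h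
      omega
    have haz : ((a : ℤ) : ZMod 3) = 1 - ((p : ℕ) : ZMod 3) := by
      rw [ha]; push_cast; rw [hk1]; ring
    rcases (show ((p : ℕ) : ZMod 3) = 1 ∨ ((p : ℕ) : ZMod 3) = 2 by
      revert hane; generalize ((p : ℕ) : ZMod 3) = c; revert c; decide) with h1 | h2
    · have ha0 : ((a : ℤ) : ZMod 3) = 0 := by rw [haz, h1]; ring
      rw [heval]
      push_cast
      rw [ha0, hk1, h1, zero_pow hp.pos.ne', zero_pow (by omega : p - 1 ≠ 0)]
      decide
    · have ha2 : ((a : ℤ) : ZMod 3) = 2 := by rw [haz, h2]; decide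
      exact hstep a ha2
  have hmain : ∀ n : ℕ, 1 ≤ n → (((polyIter φ n).eval a : ℤ) : ZMod 3) = 2 := by
    intro n hn
    induction n with
    | zero => omega
    | succ m ih =>
      rcases Nat.eq_zero_or_pos m with hm | hm
      · subst hm
        simpa [polyIter, eval_comp] using hbase
      · have := ih hm
        show (((φ.comp (polyIter φ m)).eval a : ℤ) : ZMod 3) = 2
        rw [eval_comp]
        exact hstep _ this
  constructor
  · intro n hn
    have h := (ZMod.intCast_eq_intCast_iff _ 2 3).mp (by exact_mod_cast hmain n hn)
    have h2 : (polyIter φ n).eval a % (3 : ℤ) = 2 % 3 := h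
    omega
  · intro n hn y hy
    have := hmain n hn
    rw [hy] at this
    push_cast at this
    rw [hk1, one_mul] at this
    revert this
    generalize ((y : ℤ) : ZMod 3) = c
    revert c; decide
end

section
/- Let p ≥ 3 be prime and let k ∈ ℤ with p ∤ k, and let φ(x) = x^p + kp·x^{p−1} − kp ∈ ℤ[x]. Then for every n ≥ 1 the iterate φ^n(x) is Eisenstein at p (all non-leading coefficients are divisible by p and the constant coefficient is not divisible by p²); in particular φ^n(x) is irreducible over ℚ for every n ≥ 1. -/
open Polynomial

lemma aux_iter (p : ℕ) (k : ℤ) (hp : p.Prime) (hp3 : 3 ≤ p) (hpk : ¬ (p : ℤ) ∣ k)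
    (φ : Polynomial ℤ)
    (hφ : φ = X ^ p + C (k * p) * X ^ (p - 1) - C (k * p)) :
    ∀ n : ℕ, 1 ≤ n →
      (polyIter φ n).Monic ∧ (polyIter φ n).natDegree = p ^ n ∧
      (polyIter φ n).map (Int.castRingHom (ZMod p)) = X ^ (p ^ n) ∧
      ∃ u : ℤ, (polyIter φ n).coeff 0 = p * u ∧ ¬ (p : ℤ) ∣ u := by
  have hp0 : 0 < p := hp.pos
  have hp1 : p - 1 ≠ 0 := by omega
  have hmonφ : φ.Monic := by
    rw [hφ]; monicity!; omega
  have hdegφ : φ.natDegree = p := by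
    rw [hφ]; compute_degree!; omega
  have hmapφ : φ.map (Int.castRingHom (ZMod p)) = X ^ p := by
    rw [hφ]
    have : ((k * p : ℤ) : ZMod p) = 0 := by push_cast; simp [ZMod.natCast_self]
    simp [Polynomial.map_sub, Polynomial.map_add, Polynomial.map_mul,
      Polynomial.map_pow, map_C, this]
  have hcoeffφ : ∀ c u : ℤ, c = p * u → ¬ (p : ℤ) ∣ u →
      ∃ u' : ℤ, φ.eval c = p * u' ∧ ¬ (p : ℤ) ∣ u' := by
    intro c u hc hu
    refine ⟨(p : ℤ) ^ (p - 1) * u ^ p + k * (p : ℤ) ^ (p - 1) * u ^ (p - 1) - k, ?_, ?_⟩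
    · rw [hφ, hc]
      simp only [eval_sub, eval_add, eval_mul, eval_pow, eval_C, eval_X]
      obtain ⟨q, hq⟩ : ∃ q, p = q + 1 := ⟨p - 1, by omega⟩
      have h1 : (p : ℤ) ^ p = p * (p : ℤ) ^ (p - 1) := by
        rw [hq]; simp only [Nat.add_sub_cancel, pow_succ]; ring
      ring_nf
      rw [h1]
      ring
    · intro hdvd
      have h1 : (p : ℤ) ∣ (p : ℤ) ^ (p - 1) := dvd_pow_self _ hp1
      have h2 : (p : ℤ) ∣ (p : ℤ) ^ (p - 1) * u ^ p + k * (p : ℤ) ^ (p - 1) * u ^ (p - 1) :=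
        dvd_add (h1.mul_right (u ^ p)) ((h1.mul_left k).mul_right (u ^ (p - 1)))
      have h3 := dvd_sub h2 hdvd
      rw [sub_sub_cancel] at h3
      exact hpk h3
  intro n hn
  induction n with
  | zero => omega
  | succ m ih =>
    rcases Nat.eq_or_lt_of_le hn with h1 | h1
    · -- base case m = 0
      have hm : m = 0 := by omega
      subst hm
      have : polyIter φ 1 = φ := by
        show φ.comp (polyIter φ 0) = φ
        show φ.comp X = φ
        simp
      rw [this]
      refine ⟨hmonφ, by simpa using hdegφ, by simpa using hmapφ, -k, ?_, by simpa using hpk⟩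
      rw [hφ]
      simp [coeff_X_pow, hp0.ne', hp1, Ne.symm hp0.ne', Ne.symm hp1]
      ring
    · have hm : 1 ≤ m := by omega
      obtain ⟨hmon, hdeg, hmap, u, hc, hu⟩ := ih hm
      have hdne : (polyIter φ m).natDegree ≠ 0 := by
        rw [hdeg]; positivity
      refine ⟨hmonφ.comp hmon hdne, ?_, ?_, ?_⟩
      · show (φ.comp (polyIter φ m)).natDegree = _
        rw [natDegree_comp, hdegφ, hdeg, pow_succ, mul_comm]
      · show (φ.comp (polyIter φ m)).map _ = _
        rw [Polynomial.map_comp, hmapφ, hmap, X_pow_comp, ← pow_mul, pow_succ, mul_comm]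
      · have : (φ.comp (polyIter φ m)).coeff 0 = φ.eval ((polyIter φ m).coeff 0) := by
          rw [coeff_zero_eq_eval_zero, eval_comp, coeff_zero_eq_eval_zero]
        obtain ⟨u', hu', hnd⟩ := hcoeffφ _ u hc hu
        exact ⟨u', by rw [show polyIter φ (m + 1) = φ.comp (polyIter φ m) from rfl, this, hu'], hnd⟩

/-- For `p ≥ 3` prime, `k ∈ ℤ` with `p ∤ k`, and
`φ(x) = x^p + kp·x^{p-1} - kp`, every iterate `φ^n` (`n ≥ 1`) is Eisenstein at `p`;
in particular every `φ^n` is irreducible over `ℚ`. -/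
theorem stmt_13 (p : ℕ) (k : ℤ) (hp : p.Prime) (hp3 : 3 ≤ p) (hpk : ¬ (p : ℤ) ∣ k)
    (φ : Polynomial ℤ)
    (hφ : φ = X ^ p + C (k * p) * X ^ (p - 1) - C (k * p)) :
    ∀ n : ℕ, 1 ≤ n →
      (polyIter φ n).IsEisensteinAt (Ideal.span {(p : ℤ)}) ∧
        Irreducible ((polyIter φ n).map (algebraMap ℤ ℚ)) := by
  intro n hn
  obtain ⟨hmon, hdeg, hmap, u, hc, hu⟩ := aux_iter p k hp hp3 hpk φ hφ n hn
  haveI : NeZero p := ⟨hp.pos.ne'⟩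
  have hpz : (p : ℤ) ≠ 0 := by exact_mod_cast hp.pos.ne'
  have hpint : Prime (p : ℤ) := Nat.prime_iff_prime_int.mp hp
  have heis : (polyIter φ n).IsEisensteinAt (Ideal.span {(p : ℤ)}) := by
    constructor
    · rw [hmon.leadingCoeff, Ideal.mem_span_singleton]
      exact fun h => hpint.not_dvd_one h
    · intro i hi
      rw [Ideal.mem_span_singleton]
      rw [← ZMod.intCast_zmod_eq_zero_iff_dvd]
      have := congrArg (fun q => Polynomial.coeff q i) hmap
      simp only [coeff_map, coeff_X_pow] at this
      rw [hdeg] at hi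
      simpa [hi.ne] using this
    · rw [Ideal.span_singleton_pow, Ideal.mem_span_singleton, hc]
      intro hdvd
      have : (p : ℤ) ∣ u := by
        rcases hdvd with ⟨t, ht⟩
        refine ⟨t, ?_⟩
        have := ht
        rw [pow_two, mul_assoc] at this
        exact mul_left_cancel₀ hpz this
      exact hu this
  refine ⟨heis, ?_⟩
  have hirr : Irreducible (polyIter φ n) := heis.irreducible
    ((Ideal.span_singleton_prime hpz).mpr hpint) hmon.isPrimitive
    (by rw [hdeg]; positivity)
  exact (hmon.isPrimitive.irreducible_iff_irreducible_map_fraction_map).mp hirr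
end

section
/- Fix an integer d ≥ 3. Let C be an indeterminate and define φ_C(x) = x^d − Cd·x^{d−1} + C(d−1) ∈ (ℤ[C])[x], and for n ≥ 1 let P_n ∈ ℤ[C] be the evaluation at x = 0 of the n-th iterate of φ_C, i.e. P_n = φ_C^n(0). Then for every n ≥ 1: P_n has degree d^{n−1} in C; the leading coefficient of P_n is ±(d−1)^m for some integer m ≥ 1; and P_n, regarded as a polynomial in ℚ[C], is squarefree — equivalently, all roots of P_n in an algebraic closure of ℚ are simple. -/
/-!
Write `P_n = φ_C^n(0)` and `Q_n = P_n - dC`, so that `P_{n+1} = P_n^{d-1} Q_n + (d-1)C` and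
`Q_{n+1} = P_n^{d-1} Q_n - C`. From `n = 2` on these have degree `> 1`, so the linear tails never
touch the leading terms: both degrees multiply by `d` and both leading coefficients are products
of powers of the previous ones, starting from `P_1 = (d-1)C` and `Q_1 = -C`.

For squarefreeness, `P_n' ≡ -1 (mod d)`. At a common root `c` of `P_n` and `P_n'` this gives
`d · g(c) = 1` with `g ∈ ℤ[C]`. Since `lc(P_n) · c` is integral over `ℤ` and `lc(P_n)` is coprime
to `d`, the element `g(c) = 1/d` would be integral over `ℤ`, which it is not.
-/

open Polynomial

theorem eval_polyIter_succ {R : Type*} [CommRing R] (φ : R[X]) (a : R) (n : ℕ) :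
    (polyIter φ (n + 1)).eval a = φ.eval ((polyIter φ n).eval a) :=
  eval_comp

section Integrality

variable {R : Type*} [CommRing R]

theorem isIntegral_leadingCoeff_pow_mul_aeval {A : Type*} [CommRing A] [Algebra R A]
    {p : R[X]} {c : A} (hc : aeval c p = 0) (g : R[X]) :
    IsIntegral R (algebraMap R A (p.leadingCoeff ^ g.natDegree) * aeval c g) := by
  have hLc : IsIntegral R (algebraMap R A p.leadingCoeff * c) := by
    simpa [Algebra.smul_def] using isIntegral_leadingCoeff_smul p c hc
  rw [map_pow, aeval_def, ← scaleRoots_eval₂_mul, ← aeval_def]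
  exact adjoin_le_integralClosure hLc (aeval_mem_adjoin_singleton R _)

theorem IsIntegrallyClosed.isUnit_of_isIntegral_of_mul_eq_one [IsDomain R] [IsIntegrallyClosed R]
    {K A : Type*} [Field K] [Algebra R K] [IsFractionRing R K] [CommRing A] [Nontrivial A]
    [Algebra K A] [Algebra R A] [IsScalarTower R K A] {n : R} {x : A}
    (hx : IsIntegral R x) (hnx : algebraMap R A n * x = 1) : IsUnit n := by
  have hn0 : algebraMap R K n ≠ 0 := by
    rintro h
    simp [IsScalarTower.algebraMap_apply R K A, h] at hnx
  obtain ⟨y, hy⟩ : ∃ y, algebraMap R K y = (algebraMap R K n)⁻¹ := by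
    refine IsIntegrallyClosed.isIntegral_iff.mp
      ((isIntegral_algHom_iff (IsScalarTower.toAlgHom R K A) (algebraMap K A).injective).mp ?_)
    convert hx
    refine left_inv_eq_right_inv ?_ hnx
    rw [IsScalarTower.toAlgHom_apply, IsScalarTower.algebraMap_apply R K A, ← map_mul,
      inv_mul_cancel₀ hn0, map_one]
  refine IsUnit.of_mul_eq_one y (IsFractionRing.injective R K ?_)
  rw [map_mul, hy, mul_inv_cancel₀ hn0, map_one]

theorem squarefree_map_of_C_dvd_derivative_add_one [IsDomain R] [IsIntegrallyClosed R]
    {K : Type*} [Field K] [Algebra R K] [IsFractionRing R K]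
    {p : R[X]} {n : R} (hn : ¬IsUnit n) (hcop : IsCoprime n p.leadingCoeff)
    (hder : C n ∣ derivative p + 1) :
    Squarefree (p.map (algebraMap R K)) := by
  refine Separable.squarefree ?_
  rw [separable_def, isCoprime_iff_aeval_ne_zero_of_isAlgClosed K (AlgebraicClosure K)]
  intro c
  by_contra! hc
  rw [derivative_map, aeval_map_algebraMap, aeval_map_algebraMap] at hc
  obtain ⟨hpc, hpc'⟩ := hc
  obtain ⟨g, hg⟩ := hder
  have hng : algebraMap R _ n * aeval c g = 1 := by
    simpa [hpc'] using (congrArg (aeval c) hg).symm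
  obtain ⟨a, b, hab⟩ := hcop.pow_right (n := g.natDegree)
  replace hab := congrArg (algebraMap R (AlgebraicClosure K)) hab
  simp only [map_add, map_mul, map_one] at hab
  -- with `L = lc p` and `N = deg g`: `1 = a n + b L^N`, so `g(c) = 1/n = a + b · L^N g(c)`
  have hg_int : IsIntegral R (aeval c g) := by
    rw [show aeval c g = algebraMap R _ a + algebraMap R _ b *
        (algebraMap R _ (p.leadingCoeff ^ g.natDegree) * aeval c g) by
      linear_combination (-aeval c g) * hab + algebraMap R _ a * hng]
    exact isIntegral_algebraMap.add
      (isIntegral_algebraMap.mul (isIntegral_leadingCoeff_pow_mul_aeval hpc g))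
  exact hn (IsIntegrallyClosed.isUnit_of_isIntegral_of_mul_eq_one (K := K) hg_int hng)

end Integrality

section AddCMulX

variable {R : Type*} [CommRing R] {u : R[X]}

theorem natDegree_add_C_mul_X (hu : 1 < u.natDegree) (a : R) :
    (u + C a * X).natDegree = u.natDegree :=
  natDegree_add_eq_left_of_natDegree_lt
    ((natDegree_le_of_degree_le (degree_C_mul_X_le a)).trans_lt hu)

theorem leadingCoeff_add_C_mul_X (hu : 1 < u.natDegree) (a : R) :
    (u + C a * X).leadingCoeff = u.leadingCoeff :=
  leadingCoeff_add_of_degree_lt'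
    (degree_lt_degree ((natDegree_le_of_degree_le (degree_C_mul_X_le a)).trans_lt hu))

end AddCMulX

section CriticalOrbit

noncomputable def phiC (d : ℕ) : ℤ[X][X] :=
  X ^ d - C (C (d : ℤ) * X) * X ^ (d - 1) + C (C ((d : ℤ) - 1) * X)

noncomputable def critOrbit (d n : ℕ) : ℤ[X] := (polyIter (phiC d) n).eval 0

variable {d : ℕ}

theorem critOrbit_succ (n : ℕ) :
    critOrbit d (n + 1) = critOrbit d n ^ d - C (d : ℤ) * X * critOrbit d n ^ (d - 1)
      + C ((d : ℤ) - 1) * X := by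
  simp [critOrbit, eval_polyIter_succ, phiC, mul_comm]

theorem critOrbit_succ_eq_mul (hd : 1 ≤ d) (n : ℕ) :
    critOrbit d (n + 1) =
      critOrbit d n ^ (d - 1) * (critOrbit d n - C (d : ℤ) * X) + C ((d : ℤ) - 1) * X := by
  rw [critOrbit_succ, mul_sub, ← pow_succ, Nat.sub_add_cancel hd]
  ring

theorem critOrbit_succ_sub_eq_mul (hd : 1 ≤ d) (n : ℕ) :
    critOrbit d (n + 1) - C (d : ℤ) * X =
      critOrbit d n ^ (d - 1) * (critOrbit d n - C (d : ℤ) * X) + C (-1) * X := by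
  rw [critOrbit_succ_eq_mul hd]
  simp only [map_sub, map_neg, map_one]
  ring

theorem critOrbit_one (hd : 2 ≤ d) : critOrbit d 1 = C ((d : ℤ) - 1) * X := by
  rw [critOrbit_succ_eq_mul (by omega), critOrbit, polyIter, eval_X, zero_pow (by omega),
    zero_mul, zero_add]

theorem C_dvd_derivative_critOrbit_succ_add_one (n : ℕ) :
    C (d : ℤ) ∣ derivative (critOrbit d (n + 1)) + 1 := by
  rw [critOrbit_succ]
  set p := critOrbit d n
  refine ⟨p ^ (d - 1) * derivative p - p ^ (d - 1) - X * derivative (p ^ (d - 1)) + 1, ?_⟩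
  simp only [derivative_add, derivative_mul, derivative_pow p d, derivative_C, derivative_one,
    derivative_X, map_sub, map_one]
  ring

theorem natDegree_critOrbit_and_leadingCoeff (hd : 2 ≤ d) {n : ℕ} (hn : 1 ≤ n) :
    (critOrbit d n).natDegree = d ^ (n - 1) ∧
      (critOrbit d n - C (d : ℤ) * X).natDegree = d ^ (n - 1) ∧
      (∃ m, 1 ≤ m ∧ Associated (critOrbit d n).leadingCoeff (((d : ℤ) - 1) ^ m)) ∧
      ∃ k, Associated (critOrbit d n - C (d : ℤ) * X).leadingCoeff (((d : ℤ) - 1) ^ k) := by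
  have hd1 : ((d : ℤ) - 1) ≠ 0 := by omega
  induction n, hn using Nat.le_induction with
  | base =>
    have hsub : critOrbit d 1 - C (d : ℤ) * X = -X := by
      rw [critOrbit_one hd, ← sub_mul, ← C_sub]; simp
    rw [hsub, critOrbit_one hd]
    refine ⟨natDegree_C_mul_X _ hd1, by simp, ⟨1, le_rfl, by rw [leadingCoeff_C_mul_X, pow_one]⟩,
      0, by simp⟩
  | succ n hn ih =>
    obtain ⟨hP, hQ, ⟨m, hm, hPlc⟩, k, hQlc⟩ := ih
    set P := critOrbit d n
    set Q := P - C (d : ℤ) * X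
    have hP0 : P ≠ 0 := ne_zero_of_natDegree_gt (n := 0) (by rw [hP]; positivity)
    have hQ0 : Q ≠ 0 := ne_zero_of_natDegree_gt (n := 0) (by rw [hQ]; positivity)
    have hdeg : (P ^ (d - 1) * Q).natDegree = d ^ n := by
      rw [natDegree_mul (pow_ne_zero _ hP0) hQ0, natDegree_pow, hP, hQ, ← add_one_mul,
        Nat.sub_add_cancel (by omega : 1 ≤ d), ← pow_succ', Nat.sub_add_cancel hn]
    have hdeg1 : 1 < (P ^ (d - 1) * Q).natDegree := by
      rw [hdeg]; exact Nat.one_lt_pow (by omega) (by omega)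
    have hlc : Associated (P ^ (d - 1) * Q).leadingCoeff (((d : ℤ) - 1) ^ (m * (d - 1) + k)) := by
      rw [leadingCoeff_mul, leadingCoeff_pow, pow_add, pow_mul]
      exact hPlc.pow_pow.mul_mul hQlc
    rw [critOrbit_succ_sub_eq_mul (by omega), critOrbit_succ_eq_mul (by omega),
      natDegree_add_C_mul_X hdeg1, natDegree_add_C_mul_X hdeg1, leadingCoeff_add_C_mul_X hdeg1,
      leadingCoeff_add_C_mul_X hdeg1, Nat.add_sub_cancel, hdeg]
    exact ⟨rfl, rfl, ⟨_, le_add_right (Nat.mul_pos (by omega) (by omega)), hlc⟩, _, hlc⟩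

end CriticalOrbit

/-- Fix `d ≥ 3` and let `φ_C(x) = x^d - Cd·x^{d-1} + C(d-1)` over `ℤ[C]`,
with `P_n = φ_C^n(0) ∈ ℤ[C]`. Then for every `n ≥ 1`: `P_n` has degree `d^{n-1}` in `C`, its
leading coefficient is `±(d-1)^m` for some `m ≥ 1`, and `P_n` is squarefree over `ℚ`
(equivalently, all its roots in an algebraic closure of `ℚ` are simple). -/
theorem stmt_16 (d : ℕ) (hd : 3 ≤ d)
    (ψ : Polynomial (Polynomial ℤ))
    (hψ : ψ = X ^ d - C ((Polynomial.C (d : ℤ)) * X) * X ^ (d - 1)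
      + C ((Polynomial.C ((d : ℤ) - 1)) * X)) :
    ∀ n : ℕ, 1 ≤ n →
      ((polyIter ψ n).eval 0).natDegree = d ^ (n - 1) ∧
      (∃ m : ℕ, 1 ≤ m ∧
        (((polyIter ψ n).eval 0).leadingCoeff = ((d : ℤ) - 1) ^ m ∨
          ((polyIter ψ n).eval 0).leadingCoeff = -((d : ℤ) - 1) ^ m)) ∧
      Squarefree (((polyIter ψ n).eval 0).map (algebraMap ℤ ℚ)) := by
  subst hψ
  intro n hn
  obtain ⟨hdeg, -, ⟨m, hm, hlc⟩, -⟩ := natDegree_critOrbit_and_leadingCoeff (d := d) (by omega) hn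
  refine ⟨hdeg, ⟨m, hm, Int.associated_iff.mp hlc⟩, ?_⟩
  obtain ⟨k, rfl⟩ : ∃ k, n = k + 1 := ⟨n - 1, by omega⟩
  have hd_nonunit : ¬IsUnit (d : ℤ) := by rw [Int.isUnit_iff]; omega
  have hcop : IsCoprime (d : ℤ) (critOrbit d (k + 1)).leadingCoeff := by
    obtain ⟨u, hu⟩ := hlc.symm
    rw [← hu, isCoprime_mul_unit_right_right u.isUnit]
    exact IsCoprime.pow_right ⟨1, -1, by ring⟩
  exact squarefree_map_of_C_dvd_derivative_add_one hd_nonunit hcop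
    (C_dvd_derivative_critOrbit_succ_add_one k)
end

section
/- Let b₁, b₂, b₃, … be a sequence of nonzero integers forming a rigid divisibility sequence, meaning: (1) for every prime q and all n, m ≥ 1, if q divides b_n then v_q(b_{mn}) = v_q(b_n); and (2) for every prime q and all n, m ≥ 1, min(v_q(b_n), v_q(b_m)) ≤ v_q(b_{gcd(m,n)}). Then for every n ≥ 1 and every prime q: the sum ∑_{m | n} μ(n/m) · v_q(b_m) over the positive divisors m of n (μ being the Möbius function) equals v_q(b_n) if q divides b_n and q does not divide b_m for any 1 ≤ m < n, and equals 0 otherwise. (Equivalently, the product ∏_{m | n} b_m^{μ(n/m)} generates the primitive part of b_n: the largest divisor of b_n supported on primes not dividing any earlier term, each appearing with its full multiplicity in b_n.) -/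
open ArithmeticFunction

/-!
Fix a prime `q` and put `f m = v_q(b m)`. Let `r` be the least index with `q ∣ b r`. The gcd
condition forces every `m` with `q ∣ b m` to be a multiple of `r` (otherwise `gcd m r < r` would
already be divisible by `q`), and rigidity makes `f` constant on the multiples of `r`; so
`f = f r · 1_{r ∣ ·}`. Since `1_{r ∣ m} = ∑_{d ∣ m} 1_{d = r}`, Möbius inversion turns the sum
in question into `f r · 1_{n = r}`. If `q` divides no `b m`, then `f = 0`.
-/

theorem sum_divisors_moebius_mul_ite_dvd {R : Type*} [Ring R] {n : ℕ} (hn : n ≠ 0) (r : ℕ)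
    (c : R) :
    ∑ m ∈ n.divisors, (moebius (n / m) : R) * (if r ∣ m then c else 0) =
      if n = r then c else 0 := by
  have hinv := (sum_eq_iff_sum_mul_moebius_eq (f := fun d => if d = r then c else 0)
    (g := fun m => if r ∣ m then c else 0)).mp (fun m hm => by
      simp [Finset.sum_ite_eq', Nat.mem_divisors, hm.ne']) n (Nat.pos_of_ne_zero hn)
  rwa [Nat.sum_divisorsAntidiagonal' (fun a b => (moebius a : R) * if r ∣ b then c else 0)]
    at hinv

theorem dvd_iff_padicValInt_pos {p : ℕ} [Fact p.Prime] {a : ℤ} (ha : a ≠ 0) :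
    (p : ℤ) ∣ a ↔ 0 < padicValInt p a := by
  simpa [ha, Nat.lt_iff_add_one_le] using padicValInt_dvd_iff (p := p) 1 a

structure IsRigidValuation (f : ℕ → ℕ) : Prop where
  apply_mul_of_pos : ∀ n m, 1 ≤ n → 1 ≤ m → 0 < f n → f (m * n) = f n
  min_le_apply_gcd : ∀ n m, 1 ≤ n → 1 ≤ m → min (f n) (f m) ≤ f (Nat.gcd m n)

namespace IsRigidValuation

variable {f : ℕ → ℕ}

theorem apply_eq_ite_dvd (hf : IsRigidValuation f) {r : ℕ}
    (hr : IsLeast {m | 1 ≤ m ∧ 0 < f m} r) {m : ℕ} (hm : 1 ≤ m) :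
    f m = if r ∣ m then f r else 0 := by
  obtain ⟨⟨hr₁, hr₀⟩, hr_le⟩ := hr
  split_ifs with hrm
  · obtain ⟨k, rfl⟩ := hrm
    rw [mul_comm]
    exact hf.apply_mul_of_pos r k hr₁ (Nat.pos_of_mul_pos_left hm) hr₀
  · by_contra hfm
    have hg₁ : 1 ≤ Nat.gcd m r := Nat.gcd_pos_of_pos_right m hr₁
    have hg₀ : 0 < f (Nat.gcd m r) :=
      lt_of_lt_of_le (lt_min hr₀ (Nat.pos_of_ne_zero hfm)) (hf.min_le_apply_gcd r m hr₁ hm)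
    have hgr : Nat.gcd m r = r :=
      le_antisymm (Nat.le_of_dvd hr₁ (Nat.gcd_dvd_right m r)) (hr_le ⟨hg₁, hg₀⟩)
    exact hrm (hgr ▸ Nat.gcd_dvd_left m r)

theorem sum_divisors_moebius_mul_eq {R : Type*} [Ring R] (hf : IsRigidValuation f) {n : ℕ}
    (hn : n ≠ 0) :
    ∑ m ∈ n.divisors, (moebius (n / m) : R) * (f m : R) =
      if IsLeast {m | 1 ≤ m ∧ 0 < f m} n then (f n : R) else 0 := by
  set S := {m | 1 ≤ m ∧ 0 < f m}
  rcases S.eq_empty_or_nonempty with hS | hS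
  · have hf₀ : ∀ m ∈ n.divisors, f m = 0 := fun m hm => by
      by_contra h
      exact hS.subset ⟨Nat.pos_of_mem_divisors hm, Nat.pos_of_ne_zero h⟩
    rw [if_neg (fun h => hS.subset h.1), Finset.sum_eq_zero (fun m hm => by simp [hf₀ m hm])]
  · have hr := isLeast_csInf hS
    calc ∑ m ∈ n.divisors, (moebius (n / m) : R) * (f m : R)
        = ∑ m ∈ n.divisors,
            (moebius (n / m) : R) * (if sInf S ∣ m then (f (sInf S) : R) else 0) :=
          Finset.sum_congr rfl fun m hm => by
            rw [hf.apply_eq_ite_dvd hr (Nat.pos_of_mem_divisors hm), Nat.cast_ite, Nat.cast_zero]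
      _ = if n = sInf S then (f (sInf S) : R) else 0 := sum_divisors_moebius_mul_ite_dvd hn _ _
      _ = if IsLeast S n then (f n : R) else 0 := by
          by_cases hnS : IsLeast S n
          · rw [if_pos hnS, if_pos (hnS.unique hr), ← hnS.unique hr]
          · rw [if_neg hnS, if_neg (fun h : n = sInf S => hnS (h ▸ hr))]

end IsRigidValuation

open ArithmeticFunction in
/-- Let `b₁, b₂, …` be nonzero integers forming a rigid divisibility
sequence: (1) if a prime `q` divides `b n` then `v_q(b (m*n)) = v_q(b n)`, and
(2) `min(v_q(b n), v_q(b m)) ≤ v_q(b gcd(m,n))`. Then for every `n ≥ 1` and prime `q`, the sum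
`∑_{m ∣ n} μ(n/m)·v_q(b m)` equals `v_q(b n)` if `q` divides `b n` primitively (i.e. `q ∣ b n`
but `q ∤ b m` for all `1 ≤ m < n`), and equals `0` otherwise. -/
theorem stmt_18 (b : ℕ → ℤ) (hb : ∀ n : ℕ, 1 ≤ n → b n ≠ 0)
    (h1 : ∀ q : ℕ, q.Prime → ∀ n m : ℕ, 1 ≤ n → 1 ≤ m → (q : ℤ) ∣ b n →
      padicValInt q (b (m * n)) = padicValInt q (b n))
    (h2 : ∀ q : ℕ, q.Prime → ∀ n m : ℕ, 1 ≤ n → 1 ≤ m →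
      min (padicValInt q (b n)) (padicValInt q (b m)) ≤ padicValInt q (b (Nat.gcd m n))) :
    ∀ n : ℕ, 1 ≤ n → ∀ q : ℕ, q.Prime →
      (((q : ℤ) ∣ b n ∧ ∀ m : ℕ, 1 ≤ m → m < n → ¬ (q : ℤ) ∣ b m) →
        ∑ m ∈ n.divisors, (moebius (n / m) : ℤ) * (padicValInt q (b m) : ℤ)
          = (padicValInt q (b n) : ℤ)) ∧
      ((¬ ((q : ℤ) ∣ b n ∧ ∀ m : ℕ, 1 ≤ m → m < n → ¬ (q : ℤ) ∣ b m)) →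
        ∑ m ∈ n.divisors, (moebius (n / m) : ℤ) * (padicValInt q (b m) : ℤ) = 0) := by
  intro n hn q hq
  have : Fact q.Prime := ⟨hq⟩
  have hdvd (m : ℕ) (hm : 1 ≤ m) : (q : ℤ) ∣ b m ↔ 0 < padicValInt q (b m) :=
    dvd_iff_padicValInt_pos (hb m hm)
  have hf : IsRigidValuation (fun m => padicValInt q (b m)) :=
    ⟨fun n m hn hm hpos => h1 q hq n m hn hm ((hdvd n hn).2 hpos), h2 q hq⟩
  have hprim : ((q : ℤ) ∣ b n ∧ ∀ m : ℕ, 1 ≤ m → m < n → ¬ (q : ℤ) ∣ b m) ↔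
      IsLeast {m | 1 ≤ m ∧ 0 < padicValInt q (b m)} n := by
    refine ⟨fun ⟨hqn, hmin⟩ => ⟨⟨hn, (hdvd n hn).1 hqn⟩, fun m ⟨hm, hpos⟩ => ?_⟩,
      fun ⟨⟨_, hpos⟩, hle⟩ => ⟨(hdvd n hn).2 hpos, fun m hm hmn hqm => ?_⟩⟩
    · exact not_lt.mp fun hmn => hmin m hm hmn ((hdvd m hm).2 hpos)
    · exact (hle ⟨hm, (hdvd m hm).1 hqm⟩).not_gt hmn
  have hsum := hf.sum_divisors_moebius_mul_eq (R := ℤ) (by omega : n ≠ 0)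
  simp only [Int.cast_id] at hsum
  rw [hsum]
  exact ⟨fun h => if_pos (hprim.1 h), fun h => if_neg (mt hprim.2 h)⟩
end
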